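/- arXiv:2504.02385 — 3 statements merged into one kernel-verified Lean document; each statement's English description precedes it below -/
import Mathlib

section
/- Suppose αⱼ ≤ C·αʲ/2 for all j in (2ℕ)≥p, where α > 0, C > 1, p ≥ 1. Then for all even j ≥ 2m and all ℓ ≥ 1, ( Σ_{j₁+⋯+j_ℓ = j, each jᵢ even and ≥ p} Π_{κ=1}^{ℓ} 2α_{j_κ+1}/(j_κ+1)² )^{1/(j+ℓ)} ≤ 2 C^{1/(p+1)} α, where α_{j_κ+1} denotes the value of the sequence at index j_κ+1 (assumed also bounded by C·α^{j_κ+1}/2). -/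
/-!
Each factor satisfies `2 a_{j_κ+1}/(j_κ+1)² ≤ C α^{j_κ+1} ≤ β^{j_κ+1}` with `β = C^{1/(p+1)} α`,
because `j_κ + 1 ≥ p + 1` and `C ≥ 1`. Hence every product in the sum is at most `β^{j+ℓ}`,
and the sum has at most as many terms as there are compositions of `j` into `ℓ` nonnegative
parts, of which there are at most `2^{j+ℓ}`.
-/

open Finset

namespace Finset.Nat

lemma prod_pow_succ_of_mem_antidiagonalTuple {M : Type*} [CommMonoid M] {k n : ℕ}
    {t : Fin k → ℕ} (ht : t ∈ antidiagonalTuple k n) (x : M) :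
    ∏ κ, x ^ (t κ + 1) = x ^ (n + k) := by
  rw [prod_pow_eq_pow_sum, sum_add_distrib, (mem_antidiagonalTuple.mp ht)]
  simp

/-- Giving the part `i` the weight `2^{-(i+1)}`, every tuple in `antidiagonalTuple k n` has total
weight `2^{-(n+k)}`, while all tuples together weigh at most `(∑ i, 2^{-(i+1)})^k ≤ 1`. -/
lemma card_antidiagonalTuple_le (k n : ℕ) : #(antidiagonalTuple k n) ≤ 2 ^ (n + k) := by
  have hsub : antidiagonalTuple k n ⊆ Fintype.piFinset fun _ => range (n + 1) := by
    intro t ht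
    rw [mem_antidiagonalTuple] at ht
    rw [Fintype.mem_piFinset]
    intro κ
    rw [mem_range, Nat.lt_succ_iff, ← ht]
    exact single_le_sum (fun _ _ => Nat.zero_le _) (mem_univ κ)
  have hgeom : ∑ i ∈ range (n + 1), (1 / 2 : ℝ) ^ (i + 1) ≤ 1 := by
    simp only [pow_succ, ← sum_mul]
    linarith [sum_geometric_two_le (n + 1)]
  have hweight : (#(antidiagonalTuple k n) : ℝ) * (1 / 2) ^ (n + k) ≤ 1 :=
    calc (#(antidiagonalTuple k n) : ℝ) * (1 / 2) ^ (n + k)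
        = ∑ t ∈ antidiagonalTuple k n, ∏ κ, (1 / 2 : ℝ) ^ (t κ + 1) := by
          rw [sum_congr rfl fun t ht => prod_pow_succ_of_mem_antidiagonalTuple ht _,
            sum_const, nsmul_eq_mul]
      _ ≤ ∑ t ∈ Fintype.piFinset fun _ => range (n + 1), ∏ κ, (1 / 2 : ℝ) ^ (t κ + 1) :=
          sum_le_sum_of_subset_of_nonneg hsub fun _ _ _ => by positivity
      _ = ∏ _κ : Fin k, ∑ i ∈ range (n + 1), (1 / 2 : ℝ) ^ (i + 1) :=
          (prod_univ_sum (fun _ => range (n + 1)) fun _ i => (1 / 2 : ℝ) ^ (i + 1)).symm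
      _ ≤ 1 := prod_le_one (fun _ _ => by positivity) fun _ _ => hgeom
  have hcard : (#(antidiagonalTuple k n) : ℝ) ≤ 2 ^ (n + k) := by
    rwa [one_div, inv_pow, ← div_eq_mul_inv, div_le_one (by positivity)] at hweight
  exact_mod_cast hcard

lemma sum_prod_le_two_mul_pow {k n : ℕ} {s : Finset (Fin k → ℕ)}
    (hs : s ⊆ antidiagonalTuple k n) {g : ℕ → ℝ} {β : ℝ} (hβ : 0 ≤ β)
    (hg : ∀ t ∈ s, ∀ κ, 0 ≤ g (t κ) ∧ g (t κ) ≤ β ^ (t κ + 1)) :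
    ∑ t ∈ s, ∏ κ, g (t κ) ≤ (2 * β) ^ (n + k) :=
  calc ∑ t ∈ s, ∏ κ, g (t κ)
      ≤ ∑ t ∈ s, β ^ (n + k) := sum_le_sum fun t ht => by
        rw [← prod_pow_succ_of_mem_antidiagonalTuple (hs ht)]
        exact prod_le_prod (fun κ _ => (hg t ht κ).1) fun κ _ => (hg t ht κ).2
    _ = #s * β ^ (n + k) := by rw [sum_const, nsmul_eq_mul]
    _ ≤ 2 ^ (n + k) * β ^ (n + k) := by
        gcongr
        exact_mod_cast (card_le_card hs).trans (card_antidiagonalTuple_le k n)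
    _ = (2 * β) ^ (n + k) := (mul_pow _ _ _).symm

end Finset.Nat

lemma Real.le_rpow_one_div_pow {C q : ℝ} (hC : 1 ≤ C) (hq : 0 < q) {m : ℕ} (hqm : q ≤ m) :
    C ≤ (C ^ (1 / q)) ^ m := by
  rw [← Real.rpow_natCast, ← Real.rpow_mul (by linarith)]
  calc C = C ^ (1 : ℝ) := (Real.rpow_one C).symm
    _ ≤ C ^ (1 / q * m) := Real.rpow_le_rpow_of_exponent_le hC (by
        rw [one_div_mul_eq_div, le_div_iff₀ hq]; linarith)

theorem stmt9_general (a : ℕ → ℝ) (C α : ℝ) (p m : ℕ)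
    (hα : 0 < α) (hC : 1 < C)
    (ha0 : ∀ j, 0 ≤ a j) (ha : ∀ j, p ≤ j → a j ≤ C * α ^ j / 2) :
    ∀ j ℓ : ℕ, Even j → 2 * m ≤ j → 1 ≤ ℓ →
      (∑ t ∈ (Finset.Nat.antidiagonalTuple ℓ j).filter
            (fun t => ∀ κ, Even (t κ) ∧ p ≤ t κ),
          ∏ κ, 2 * a (t κ + 1) / ((t κ : ℝ) + 1) ^ 2) ^
          ((1 : ℝ) / ((j : ℝ) + (ℓ : ℝ))) ≤
        2 * C ^ ((1 : ℝ) / ((p : ℝ) + 1)) * α := by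
  intro j ℓ _ _ hℓ
  set β := C ^ ((1 : ℝ) / ((p : ℝ) + 1)) * α
  have hβ : 0 ≤ β := by positivity
  have hfactor : ∀ n, p ≤ n → 2 * a (n + 1) / ((n : ℝ) + 1) ^ 2 ≤ β ^ (n + 1) := fun n hn =>
    calc 2 * a (n + 1) / ((n : ℝ) + 1) ^ 2
        ≤ 2 * a (n + 1) := div_le_self (by linarith [ha0 (n + 1)])
          (one_le_pow₀ (le_add_of_nonneg_left n.cast_nonneg))
      _ ≤ C * α ^ (n + 1) := by linarith [ha (n + 1) (by omega)]
      _ ≤ β ^ (n + 1) := by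
        rw [mul_pow]
        gcongr
        exact Real.le_rpow_one_div_pow hC.le (by positivity) (by exact_mod_cast Nat.succ_le_succ hn)
  have hfactor_nonneg : ∀ n, 0 ≤ 2 * a (n + 1) / ((n : ℝ) + 1) ^ 2 := fun n => by
    have := ha0 (n + 1); positivity
  calc _ ≤ ((2 * β) ^ (j + ℓ)) ^ ((1 : ℝ) / ((j : ℝ) + (ℓ : ℝ))) := by
        refine Real.rpow_le_rpow (sum_nonneg fun t _ => prod_nonneg fun κ _ => hfactor_nonneg _)
          (Finset.Nat.sum_prod_le_two_mul_pow (g := fun n => 2 * a (n + 1) / ((n : ℝ) + 1) ^ 2)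
            (filter_subset _ _) hβ fun t ht κ => ?_)
          (by positivity)
        exact ⟨hfactor_nonneg _, hfactor _ ((mem_filter.mp ht).2 κ).2⟩
    _ = 2 * β := by
        rw [one_div, ← Nat.cast_add, Real.pow_rpow_inv_natCast (by positivity) (by omega)]
    _ = 2 * C ^ ((1 : ℝ) / ((p : ℝ) + 1)) * α := by ring

/-- The combinatorial bound behind `λ_comm ≤ 2 C^{1/(p+1)} α` (Remark 5 of the paper).
If the nonnegative sequence `a` satisfies `a_j ≤ C αʲ/2` for all `j ≥ p` (covering the
even indices `≥ p` as well as the shifted indices `j_κ + 1`), `α > 0`, `C > 1`, `p ≥ 1`,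
then for every even `j ≥ 2m` and every `ℓ ≥ 1`,
`( Σ_{j₁+⋯+j_ℓ = j, each jᵢ even and ≥ p} Π_κ 2 a_{j_κ+1}/(j_κ+1)² )^{1/(j+ℓ)}
  ≤ 2 C^{1/(p+1)} α`. -/
theorem stmt9 (a : ℕ → ℝ) (C α : ℝ) (p m : ℕ)
    (hα : 0 < α) (hC : 1 < C) (hp : 1 ≤ p)
    (ha0 : ∀ j, 0 ≤ a j) (ha : ∀ j, p ≤ j → a j ≤ C * α ^ j / 2) :
    ∀ j ℓ : ℕ, Even j → 2 * m ≤ j → 1 ≤ ℓ →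
      (∑ t ∈ (Finset.Nat.antidiagonalTuple ℓ j).filter
            (fun t => ∀ κ, Even (t κ) ∧ p ≤ t κ),
          ∏ κ, 2 * a (t κ + 1) / ((t κ : ℝ) + 1) ^ 2) ^
          ((1 : ℝ) / ((j : ℝ) + (ℓ : ℝ))) ≤
        2 * C ^ ((1 : ℝ) / ((p : ℝ) + 1)) * α :=
  stmt9_general a C α p m hα hC ha0 ha
end

section
/- Let H = Σ_{j=1}^L λ_j P_j where the P_j are unitary and Hermitian and the λ_j are nonzero. Suppose U = (V₁⊗I) c₀-P₁ (V₂⊗I) c₀-P₂ ⋯ (V_L⊗I) c₀-P_L (V_{L+1}⊗I) where V₁,…,V_{L+1} are unitaries on m ancilla qubits and c₀-P_j = |0^m⟩⟨0^m| ⊗ (P_j − I) + I ⊗ I. If (⟨0^m| ⊗ I) U (|0^m⟩ ⊗ I) = H holds for all choices of unitaries P₁,…,P_L (with the same coefficients λ_j), then 2^m ≥ L, i.e., m ≥ log₂ L. -/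
/-!
Take the scalar unitaries `P_j = ε_j • 1` with signs `ε_j = ±1`, and index the `V`'s from `0`.
The circuit then acts as `A(ε) ⊗ 1` with `A(ε) = V₀ D(ε₀) V₁ ⋯ D(ε_{L-1}) V_L` and
`D(t) = 1 + (t - 1)|0⟩⟨0|`, so the block encoding says `⟨0|A(ε)|0⟩ = ∑ λ_j ε_j`, an identity
between multi-affine functions of `ε`. Flipping the sign `ε_c` gives
`⟨0|V₀⋯V_c|0⟩⟨0|V_{c+1}⋯V_L|0⟩ = λ_c ≠ 0`, and the mixed second difference in two signs
`ε_c, ε_b` (`c < b`) then forces `⟨0|V_{c+1}⋯V_b|0⟩ = 0`. Hence the vectors `V₁⋯V_b|0⟩` for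
`b < L` are orthonormal in the `2^m`-dimensional ancilla space.
-/

open Matrix
open scoped Kronecker

/-- The all-zeros basis state index of the `m`-qubit ancilla register. -/
def anc0 (m : ℕ) : Fin (2 ^ m) := ⟨0, pow_pos (by norm_num) m⟩

/-- The rank-one projector `|0^m⟩⟨0^m|` on the ancilla register. -/
noncomputable def e00 (m : ℕ) : Matrix (Fin (2 ^ m)) (Fin (2 ^ m)) ℂ :=
  Matrix.single (anc0 m) (anc0 m) 1

/-- The zero-controlled unitary `c₀-P = |0^m⟩⟨0^m| ⊗ (P − I) + I ⊗ I`. -/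
noncomputable def ctrl0 (m : ℕ) {N : ℕ} (P : Matrix (Fin N) (Fin N) ℂ) :
    Matrix (Fin (2 ^ m) × Fin N) (Fin (2 ^ m) × Fin N) ℂ :=
  e00 m ⊗ₖ (P - 1) + 1

/-- The circuit `U = (V₁⊗I) c₀-P₁ (V₂⊗I) c₀-P₂ ⋯ (V_L⊗I) c₀-P_L (V_{L+1}⊗I)`. -/
noncomputable def circuit (m : ℕ) {N L : ℕ}
    (V : Fin (L + 1) → Matrix (Fin (2 ^ m)) (Fin (2 ^ m)) ℂ)
    (P : Fin L → Matrix (Fin N) (Fin N) ℂ) :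
    Matrix (Fin (2 ^ m) × Fin N) (Fin (2 ^ m) × Fin N) ℂ :=
  (List.ofFn (fun j : Fin L =>
      (V j.castSucc ⊗ₖ (1 : Matrix (Fin N) (Fin N) ℂ)) * ctrl0 m (P j))).prod *
    (V (Fin.last L) ⊗ₖ (1 : Matrix (Fin N) (Fin N) ℂ))

/-- The compression `(⟨0^m| ⊗ I) U (|0^m⟩ ⊗ I)` of a circuit on ancilla ⊗ system. -/
noncomputable def compress (m : ℕ) {N : ℕ}
    (U : Matrix (Fin (2 ^ m) × Fin N) (Fin (2 ^ m) × Fin N) ℂ) :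
    Matrix (Fin N) (Fin N) ℂ :=
  Matrix.of fun i j => U (anc0 m, i) (anc0 m, j)

section RangeProd

variable {M : Type*} [Monoid M]

def rangeProd (f : ℕ → M) (a n : ℕ) : M :=
  ((List.range' a n).map f).prod

theorem rangeProd_add (f : ℕ → M) (a n k : ℕ) :
    rangeProd f a (n + k) = rangeProd f a n * rangeProd f (a + n) k := by
  rw [rangeProd, ← List.range'_append_1, List.map_append, List.prod_append]
  rfl

theorem rangeProd_succ (f : ℕ → M) (a n : ℕ) :
    rangeProd f a (n + 1) = rangeProd f a n * f (a + n) := by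
  rw [rangeProd_add]
  simp [rangeProd]

theorem rangeProd_congr {f g : ℕ → M} {a n : ℕ} (h : ∀ k, a ≤ k → k < a + n → f k = g k) :
    rangeProd f a n = rangeProd g a n := by
  unfold rangeProd
  rw [List.map_congr_left fun k hk => h k (List.mem_range'_1.1 hk).1 (List.mem_range'_1.1 hk).2]

theorem rangeProd_mem {S : Type*} [SetLike S M] [SubmonoidClass S M] {s : S} {f : ℕ → M}
    (h : ∀ k, f k ∈ s) (a n : ℕ) : rangeProd f a n ∈ s :=
  list_prod_mem (List.forall_mem_map.2 fun k _ => h k)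

theorem prod_ofFn_eq_rangeProd (f : ℕ → M) (n : ℕ) :
    (List.ofFn fun i : Fin n => f i).prod = rangeProd f 0 n := by
  rw [rangeProd, ← List.range_eq_range', List.ofFn_eq_map, ← List.map_coe_finRange_eq_range,
    List.map_map]
  rfl

end RangeProd

section NatExtend

variable {M : Type*} [One M] {n : ℕ}

def natExtend (V : Fin n → M) (k : ℕ) : M :=
  if h : k < n then V ⟨k, h⟩ else 1

theorem natExtend_of_lt (V : Fin n → M) (i : Fin n) : natExtend V i = V i :=
  dif_pos i.isLt

theorem natExtend_mem {S : Type*} [SetLike S M] [OneMemClass S M] {s : S} {V : Fin n → M}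
    (hV : ∀ i, V i ∈ s) (k : ℕ) : natExtend V k ∈ s := by
  unfold natExtend
  split
  · exact hV _
  · exact one_mem s

end NatExtend

theorem sum_mul_update {L : ℕ} (lam : Fin L → ℂ) (f : ℕ → ℂ) (b : Fin L) (t : ℂ) :
    ∑ j : Fin L, lam j * Function.update f b t j = ∑ j, lam j * f j + (t - f b) * lam b := by
  have hupd : ∀ j : Fin L, Function.update f b t j = f j + if j = b then t - f b else 0 := by
    intro j
    by_cases hj : j = b
    · simp [hj]
    · simp [hj, Function.update_of_ne (Fin.val_injective.ne hj)]
  simp [hupd, mul_add, Finset.sum_add_distrib, mul_comm]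

theorem card_le_card_of_mul_eq_one {m n R : Type*} [Fintype m] [Fintype n] [DecidableEq n]
    [CommRing R] [StrongRankCondition R] (A : Matrix n m R) (B : Matrix m n R) (h : A * B = 1) :
    Fintype.card n ≤ Fintype.card m :=
  calc Fintype.card n = (A * B).rank := by rw [h, rank_one]
    _ ≤ A.rank := rank_mul_le_left A B
    _ ≤ Fintype.card m := rank_le_card_width A

theorem card_le_of_star_mul_apply_eq_zero {ι n : Type*} [Fintype ι] [LinearOrder ι] [Fintype n]
    [DecidableEq n] (Q : ι → Matrix n n ℂ) (hQ : ∀ i, Q i ∈ unitaryGroup n ℂ) (e : n)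
    (h : ∀ i j, i < j → (star (Q i) * Q j) e e = 0) :
    Fintype.card ι ≤ Fintype.card n := by
  let G : Matrix n ι ℂ := of fun k i => Q i k e
  have hG : ∀ i j, (Gᴴ * G) i j = (star (Q i) * Q j) e e := by
    intro i j
    simp [G, mul_apply, star_apply]
  refine card_le_card_of_mul_eq_one Gᴴ G (ext fun i j => ?_)
  rcases lt_trichotomy i j with hij | rfl | hij
  · rw [hG, h i j hij, one_apply_ne hij.ne]
  · rw [hG, Unitary.star_mul_self_of_mem (hQ i), one_apply_eq, one_apply_eq]
  · rw [← (isHermitian_conjTranspose_mul_self G).apply, hG, h j i hij, star_zero,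
      one_apply_ne hij.ne']

section Phase

variable {n : Type*} [DecidableEq n]

noncomputable def phaseAt (e : n) (t : ℂ) : Matrix n n ℂ :=
  (t - 1) • single e e 1 + 1

theorem phaseAt_one (e : n) : phaseAt e 1 = 1 := by
  simp [phaseAt]

variable [Fintype n]

theorem mul_phaseAt_mul_apply (e : n) (t : ℂ) (X Y : Matrix n n ℂ) (i j : n) :
    (X * phaseAt e t * Y) i j = (X * Y) i j + (t - 1) * (X i e * Y e j) := by
  have hE : (X * single e e 1 * Y : Matrix n n ℂ) i j = X i e * Y e j := by
    simp [mul_apply, single_apply, ite_and]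
  rw [phaseAt, Matrix.mul_add, Matrix.mul_one, Matrix.add_mul, Matrix.mul_smul, Matrix.smul_mul,
    Matrix.add_apply, Matrix.smul_apply, hE, smul_eq_mul, add_comm]

noncomputable def phaseWord (e : n) (W : ℕ → Matrix n n ℂ) (ε : ℕ → ℂ) (L : ℕ) :
    Matrix n n ℂ :=
  rangeProd (fun k => W k * phaseAt e (ε k)) 0 L * W L

variable (e : n) (W : ℕ → Matrix n n ℂ) {ε : ℕ → ℂ}

theorem rangeProd_phaseAt_of_eq_one {a k : ℕ} (h : ∀ i, a ≤ i → i < a + k → ε i = 1) :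
    rangeProd (fun i => W i * phaseAt e (ε i)) a k = rangeProd W a k :=
  rangeProd_congr fun i h₁ h₂ => by rw [h i h₁ h₂, phaseAt_one, mul_one]

theorem rangeProd_phaseAt_split {a k : ℕ} (h : ∀ i, a ≤ i → i < a + k → ε i = 1) (l : ℕ) :
    rangeProd (fun i => W i * phaseAt e (ε i)) a (k + 1 + l)
      = rangeProd W a (k + 1) * phaseAt e (ε (a + k))
          * rangeProd (fun i => W i * phaseAt e (ε i)) (a + k + 1) l := by
  rw [rangeProd_add, rangeProd_succ, rangeProd_phaseAt_of_eq_one e W h, rangeProd_succ,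
    ← Nat.add_assoc]
  simp only [mul_assoc]

theorem phaseWord_eq_rangeProd {L : ℕ} (h : ε L = 1) :
    phaseWord e W ε L = rangeProd (fun i => W i * phaseAt e (ε i)) 0 (L + 1) := by
  rw [phaseWord, rangeProd_succ, zero_add, h, phaseAt_one, mul_one]

theorem phaseWord_update_one {L c : ℕ} (hc : c < L) (s : ℂ) :
    phaseWord e W (Function.update 1 c s) L
      = rangeProd W 0 (c + 1) * phaseAt e s * rangeProd W (c + 1) (L - c) := by
  obtain ⟨q, rfl⟩ : ∃ q, L = c + q := ⟨L - c, by omega⟩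
  rw [phaseWord_eq_rangeProd e W (Function.update_of_ne (by omega) _ _),
    show c + q + 1 = c + 1 + q by omega,
    rangeProd_phaseAt_split e W (fun i _ hi => Function.update_of_ne (by omega) _ _),
    rangeProd_phaseAt_of_eq_one e W (fun i hi _ => Function.update_of_ne (by omega) _ _)]
  simp

theorem phaseWord_update_update {L c b : ℕ} (hcb : c < b) (hb : b < L) (s t : ℂ) :
    phaseWord e W (Function.update (Function.update 1 c s) b t) L
      = rangeProd W 0 (c + 1) * phaseAt e s * rangeProd W (c + 1) (b - c) * phaseAt e t
          * rangeProd W (b + 1) (L - b) := by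
  obtain ⟨p, rfl⟩ : ∃ p, b = c + 1 + p := ⟨b - c - 1, by omega⟩
  obtain ⟨q, rfl⟩ : ∃ q, L = c + 1 + p + q := ⟨L - (c + 1 + p), by omega⟩
  have hε : ∀ i, i ≠ c → i ≠ c + 1 + p →
      Function.update (Function.update (1 : ℕ → ℂ) c s) (c + 1 + p) t i = 1 := by
    intro i h₁ h₂
    simp [Function.update_of_ne, h₁, h₂]
  rw [phaseWord_eq_rangeProd e W (hε _ (by omega) (by omega)),
    show c + 1 + p + q + 1 = c + 1 + (p + 1 + q) by omega,
    rangeProd_phaseAt_split e W (fun i _ hi => hε i (by omega) (by omega)),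
    rangeProd_phaseAt_split e W (fun i hi _ => hε i (by omega) (by omega)),
    rangeProd_phaseAt_of_eq_one e W (fun i hi _ => hε i (by omega) (by omega))]
  simp only [zero_add]
  rw [Function.update_of_ne (show c ≠ c + 1 + p by omega), Function.update_self,
    Function.update_self, show c + 1 + p - c = p + 1 by omega,
    show c + 1 + p + q - (c + 1 + p) = q by omega]
  simp only [mul_assoc]

end Phase

section PhaseWord

variable {n : Type*} [Fintype n] [DecidableEq n] {e : n} {L : ℕ} {lam : Fin L → ℂ}
  {W : ℕ → Matrix n n ℂ}
  (hword : ∀ ε : ℕ → ℂ, (∀ k, ε k = 1 ∨ ε k = -1) →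
    phaseWord e W ε L e e = ∑ j, lam j * ε j)
include hword

theorem apply_mul_apply_eq_of_phaseWord (c : Fin L) :
    rangeProd W 0 (c + 1) e e * rangeProd W (c + 1) (L - c) e e = lam c := by
  have hflip : ∀ s : ℂ, (s = 1 ∨ s = -1) →
      (rangeProd W 0 (c + 1) * rangeProd W (c + 1) (L - c)) e e
        + (s - 1) * (rangeProd W 0 (c + 1) e e * rangeProd W (c + 1) (L - c) e e)
        = ∑ j, lam j + (s - 1) * lam c := by
    intro s hs
    have h := hword (Function.update 1 c s) fun k => by
      rw [Function.update_apply]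
      split_ifs
      exacts [hs, .inl rfl]
    rw [phaseWord_update_one e W c.isLt, mul_phaseAt_mul_apply, sum_mul_update] at h
    simpa only [Pi.one_apply, mul_one] using h
  linear_combination (hflip 1 (.inl rfl) - hflip (-1) (.inr rfl)) / 2

theorem apply_mul_apply_mul_apply_eq_zero_of_phaseWord {c b : Fin L} (hcb : c < b) :
    rangeProd W 0 (c + 1) e e * rangeProd W (c + 1) (b - c) e e
      * rangeProd W (b + 1) (L - b) e e = 0 := by
  set A := rangeProd W 0 (c + 1)
  set M := rangeProd W (c + 1) (b - c)
  set B := rangeProd W (b + 1) (L - b)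
  have hflip : ∀ s t : ℂ, (s = 1 ∨ s = -1) → (t = 1 ∨ t = -1) →
      (A * (M * B)) e e + (s - 1) * (A e e * (M * B) e e)
        + (t - 1) * (((A * M) e e + (s - 1) * (A e e * M e e)) * B e e)
        = ∑ j, lam j + (s - 1) * lam c + (t - 1) * lam b := by
    intro s t hs ht
    have h := hword (Function.update (Function.update 1 c s) b t) fun k => by
      rw [Function.update_apply, Function.update_apply]
      split_ifs
      exacts [ht, hs, .inl rfl]
    rw [phaseWord_update_update e W hcb b.isLt, mul_phaseAt_mul_apply,
      Matrix.mul_assoc (A * phaseAt e s) M B, mul_phaseAt_mul_apply, mul_phaseAt_mul_apply,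
      sum_mul_update, sum_mul_update, Function.update_of_ne (Fin.val_injective.ne hcb.ne')] at h
    simpa only [Pi.one_apply, mul_one] using h
  -- the mixed second difference in `(s, t)` isolates the coefficient of `(s - 1) * (t - 1)`
  linear_combination (hflip 1 1 (.inl rfl) (.inl rfl) - hflip 1 (-1) (.inl rfl) (.inr rfl)
    - hflip (-1) 1 (.inr rfl) (.inl rfl) + hflip (-1) (-1) (.inr rfl) (.inr rfl)) / 4

theorem apply_eq_zero_of_phaseWord (hlam : ∀ j, lam j ≠ 0) {c b : Fin L} (hcb : c < b) :
    rangeProd W (c + 1) (b - c) e e = 0 := by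
  have hA : rangeProd W 0 (c + 1) e e ≠ 0 := fun h0 =>
    hlam c (by rw [← apply_mul_apply_eq_of_phaseWord hword c, h0, zero_mul])
  have hB : rangeProd W (b + 1) (L - b) e e ≠ 0 := fun h0 =>
    hlam b (by rw [← apply_mul_apply_eq_of_phaseWord hword b, h0, mul_zero])
  simpa [hA, hB] using apply_mul_apply_mul_apply_eq_zero_of_phaseWord hword hcb

theorem card_le_of_phaseWord (hlam : ∀ j, lam j ≠ 0) (hW : ∀ k, W k ∈ unitaryGroup n ℂ) :
    L ≤ Fintype.card n := by
  have hQ : ∀ a, rangeProd W 1 a ∈ unitaryGroup n ℂ := rangeProd_mem hW 1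
  simpa using card_le_of_star_mul_apply_eq_zero (fun b : Fin L => rangeProd W 1 b)
    (fun b => hQ b) e fun c b hcb => by
      rw [show (b : ℕ) = c + (b - c) by omega, rangeProd_add, ← Matrix.mul_assoc,
        Unitary.star_mul_self_of_mem (hQ c), Matrix.one_mul, add_comm]
      exact apply_eq_zero_of_phaseWord hword hlam hcb

end PhaseWord

theorem list_prod_map_kronecker_one {n p R : Type*} [Fintype n] [DecidableEq n] [Fintype p]
    [DecidableEq p] [CommSemiring R] (l : List (Matrix n n R)) :
    (l.map (· ⊗ₖ (1 : Matrix p p R))).prod = l.prod ⊗ₖ (1 : Matrix p p R) := by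
  induction l with
  | nil => simp
  | cons A l ih =>
    rw [List.map_cons, List.prod_cons, ih, List.prod_cons, ← mul_kronecker_mul, one_mul]

theorem ctrl0_smul_one (m N : ℕ) (t : ℂ) :
    ctrl0 m (t • (1 : Matrix (Fin N) (Fin N) ℂ)) = phaseAt (anc0 m) t ⊗ₖ 1 := by
  rw [ctrl0, phaseAt, e00, show t • (1 : Matrix (Fin N) (Fin N) ℂ) - 1 = (t - 1) • 1 by
    rw [sub_smul, one_smul], kronecker_smul, add_kronecker, smul_kronecker, one_kronecker_one]

theorem circuit_smul_one (m N : ℕ) {L : ℕ}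
    (V : Fin (L + 1) → Matrix (Fin (2 ^ m)) (Fin (2 ^ m)) ℂ) (ε : ℕ → ℂ) :
    circuit m V (fun j => ε j • (1 : Matrix (Fin N) (Fin N) ℂ))
      = phaseWord (anc0 m) (natExtend V) ε L ⊗ₖ 1 := by
  have hfactors : (List.ofFn fun j : Fin L =>
        (V j.castSucc ⊗ₖ (1 : Matrix (Fin N) (Fin N) ℂ)) * ctrl0 m (ε j • 1))
      = (List.ofFn fun j : Fin L => natExtend V j * phaseAt (anc0 m) (ε j)).map (· ⊗ₖ 1) := by
    rw [List.map_ofFn]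
    congr 1
    funext j
    rw [ctrl0_smul_one, ← mul_kronecker_mul, one_mul, ← natExtend_of_lt V j.castSucc,
      Fin.val_castSucc]
    rfl
  rw [circuit, hfactors, list_prod_map_kronecker_one,
    prod_ofFn_eq_rangeProd (fun k => natExtend V k * phaseAt (anc0 m) (ε k)),
    ← natExtend_of_lt V (Fin.last L), Fin.val_last, ← mul_kronecker_mul, one_mul, phaseWord]

theorem compress_kronecker_one (m N : ℕ) (A : Matrix (Fin (2 ^ m)) (Fin (2 ^ m)) ℂ) :
    compress m (A ⊗ₖ (1 : Matrix (Fin N) (Fin N) ℂ)) = A (anc0 m) (anc0 m) • 1 := by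
  ext i j
  simp [compress, one_apply]

/-- Lower bound on the number of ancilla qubits for block encoding a linear combination
of unitaries: if the circuit `U = (V₁⊗I) c₀-P₁ ⋯ (V_L⊗I) c₀-P_L (V_{L+1}⊗I)` exactly
block-encodes `Σ_j λ_j P_j` (with all `λ_j ≠ 0`) for every choice of unitaries
`P₁, …, P_L`, then `2^m ≥ L`, i.e. `m ≥ log₂ L`. -/
theorem stmt15 (m N L : ℕ) (hN : 0 < N) (lam : Fin L → ℂ) (hlam : ∀ j, lam j ≠ 0)
    (V : Fin (L + 1) → Matrix (Fin (2 ^ m)) (Fin (2 ^ m)) ℂ)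
    (hV : ∀ j, V j ∈ Matrix.unitaryGroup (Fin (2 ^ m)) ℂ)
    (hblock : ∀ P : Fin L → Matrix (Fin N) (Fin N) ℂ,
      (∀ j, P j ∈ Matrix.unitaryGroup (Fin N) ℂ) →
      compress m (circuit m V P) = ∑ j, lam j • P j) :
    L ≤ 2 ^ m := by
  have hword : ∀ ε : ℕ → ℂ, (∀ k, ε k = 1 ∨ ε k = -1) →
      phaseWord (anc0 m) (natExtend V) ε L (anc0 m) (anc0 m) = ∑ j, lam j * ε j := by
    intro ε hε
    have hP : ∀ j : Fin L, ε j • (1 : Matrix (Fin N) (Fin N) ℂ) ∈ unitaryGroup (Fin N) ℂ := by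
      intro j
      rcases hε j with h | h <;> simp [h, Matrix.mem_unitaryGroup_iff]
    have h := congrFun₂ (hblock _ hP) ⟨0, hN⟩ ⟨0, hN⟩
    simpa [circuit_smul_one, compress_kronecker_one, Matrix.sum_apply, smul_smul] using h
  simpa using card_le_of_phaseWord hword hlam (natExtend_mem hV)
end

section
/- Let θ(x) be the shifted sign function: θ(x) = 1 for x ≤ μ and θ(x) = 0 for x > μ. Suppose P is a function (e.g., a Laurent polynomial composed with e^{ix}) satisfying |P(x) − 1| ≤ γε/12 on [−1, μ−Δ/2] and |P(x)| ≤ γε/12 on [μ+Δ/2, 1]. Let H be a Hermitian matrix with spectrum in [−1, μ−Δ/2] ∪ [μ+Δ/2, 1], let |φ₀⟩ be a unit vector, and let |ψ₀⟩ be the (unit-norm) projection direction θ(H)|φ₀⟩ = ⟨ψ₀|φ₀⟩|ψ₀⟩ with |⟨ψ₀|φ₀⟩| ≥ γ > 0. Then ‖P(H)|φ₀⟩ − ⟨ψ₀|φ₀⟩|ψ₀⟩‖ ≤ γε/12, and the normalized state ψ = P(H)|φ₀⟩/‖P(H)|φ₀⟩‖ satisfies ‖ψ − e^{iα}ψ₀‖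 ≤ ε/6 for a suitable phase α, hence |⟨ψ|O|ψ⟩ − ⟨ψ₀|O|ψ₀⟩| ≤ ε‖O‖/2 for any Hermitian O. -/
open Matrix

/-- The operator (spectral) norm of a complex matrix, via its action on Euclidean space. -/
noncomputable def opNorm {ι : Type*} [Fintype ι] [DecidableEq ι]
    (A : Matrix ι ι ℂ) : ℝ :=
  ‖Matrix.toEuclideanCLM (𝕜 := ℂ) A‖

/-- Applying a scalar function `g` to a Hermitian matrix `H` via its spectral
decomposition: `g(H) = U · diag(g(λᵢ)) · U†`. -/
noncomputable def matFun {n : ℕ} {H : Matrix (Fin n) (Fin n) ℂ}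
    (hH : H.IsHermitian) (g : ℝ → ℂ) : Matrix (Fin n) (Fin n) ℂ :=
  (hH.eigenvectorUnitary : Matrix (Fin n) (Fin n) ℂ) *
    Matrix.diagonal (fun i => g (hH.eigenvalues i)) *
    (hH.eigenvectorUnitary : Matrix (Fin n) (Fin n) ℂ)ᴴ


/-!
On the spectrum of `H` the function `P` is within `γε/12` of the step function `θ`, so
`‖P(H) - θ(H)‖ ≤ γε/12` by unitary invariance of the operator norm, and applying this to `φ₀`
gives the first bound since `θ(H)φ₀ = ⟨ψ₀|φ₀⟩ψ₀`. Normalizing costs a factor `2/‖⟨ψ₀|φ₀⟩‖ ≤ 2/γ`,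
and the normalization of `⟨ψ₀|φ₀⟩ψ₀` is `ψ₀` up to the phase of `⟨ψ₀|φ₀⟩`, which gives `ε/6`.
Expectation values of unit vectors differ by at most `2‖O‖` times their distance, and the
phase drops out of `⟨ψ₀|O|ψ₀⟩`.
-/

namespace NormedSpace

variable {V : Type*} [NormedAddCommGroup V] [NormedSpace ℝ V]

lemma norm_normalize_le_one (x : V) : ‖normalize x‖ ≤ 1 := by
  by_cases hx : x = 0
  · simp [hx]
  · exact (norm_normalize hx).le

lemma norm_normalize_sub_normalize_le (v : V) {w : V} (hw : w ≠ 0) :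
    ‖normalize v - normalize w‖ ≤ 2 * ‖v - w‖ / ‖w‖ := by
  have hw' : 0 < ‖w‖ := norm_pos_iff.2 hw
  have hsplit : normalize v - normalize w =
      (‖v‖⁻¹ - ‖w‖⁻¹) • v + ‖w‖⁻¹ • (v - w) := by
    simp only [normalize, sub_smul, smul_sub]
    abel
  have hscale : ‖(‖v‖⁻¹ - ‖w‖⁻¹) • v‖ ≤ ‖v - w‖ / ‖w‖ := by
    by_cases hv : v = 0
    · simp only [hv, smul_zero, norm_zero]
      positivity
    have hv' : 0 < ‖v‖ := norm_pos_iff.2 hv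
    calc ‖(‖v‖⁻¹ - ‖w‖⁻¹) • v‖ = |(‖v‖⁻¹ - ‖w‖⁻¹) * ‖v‖| := by
          rw [norm_smul, Real.norm_eq_abs, abs_mul, abs_norm]
      _ = |‖w‖ - ‖v‖| / ‖w‖ := by
          rw [show (‖v‖⁻¹ - ‖w‖⁻¹) * ‖v‖ = (‖w‖ - ‖v‖) / ‖w‖ by field_simp, abs_div,
            abs_of_pos hw']
      _ ≤ ‖v - w‖ / ‖w‖ := by
          gcongr
          rw [abs_sub_comm]
          exact abs_norm_sub_norm_le v w
  calc ‖normalize v - normalize w‖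
      ≤ ‖(‖v‖⁻¹ - ‖w‖⁻¹) • v‖ + ‖‖w‖⁻¹ • (v - w)‖ := hsplit ▸ norm_add_le _ _
    _ ≤ ‖v - w‖ / ‖w‖ + ‖v - w‖ / ‖w‖ := by
        gcongr
        rw [norm_smul, norm_inv, norm_norm, inv_mul_eq_div]
    _ = 2 * ‖v - w‖ / ‖w‖ := by ring

variable {E : Type*} [NormedAddCommGroup E] [NormedSpace ℂ E]

lemma normalize_smul_of_norm_eq_one {c : ℂ} (hc : c ≠ 0) {ψ : E} (hψ : ‖ψ‖ = 1) :
    normalize (c • ψ) = Complex.exp (c.arg * Complex.I) • ψ := by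
  have hc' : 0 < ‖c‖ := norm_pos_iff.2 hc
  have hunit : ‖Complex.exp (c.arg * Complex.I) • ψ‖ = 1 := by
    rw [norm_smul, Complex.norm_exp_ofReal_mul_I, hψ, one_mul]
  conv_lhs => rw [← Complex.norm_mul_exp_arg_mul_I c, mul_smul, Complex.coe_smul]
  rw [normalize_smul_of_pos hc', normalize_eq_self_of_norm_eq_one hunit]

lemma norm_normalize_sub_exp_arg_smul_le {c : ℂ} (hc : c ≠ 0) {ψ : E} (hψ : ‖ψ‖ = 1) (v : E) :
    ‖normalize v - Complex.exp (c.arg * Complex.I) • ψ‖ ≤ 2 * ‖v - c • ψ‖ / ‖c‖ := by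
  have hψ' : ψ ≠ 0 := norm_ne_zero_iff.1 (hψ ▸ one_ne_zero)
  rw [← normalize_smul_of_norm_eq_one hc hψ]
  simpa only [norm_smul, hψ, mul_one] using norm_normalize_sub_normalize_le v (smul_ne_zero hc hψ')

end NormedSpace

open NormedSpace
open scoped Matrix.Norms.L2Operator

section Expectation

variable {𝕜 E : Type*} [RCLike 𝕜] [NormedAddCommGroup E] [InnerProductSpace 𝕜 E]

lemma inner_smul_map_smul_of_norm_eq_one {e : 𝕜} (he : ‖e‖ = 1) (T : E →L[𝕜] E) (ψ : E) :
    inner 𝕜 (e • ψ) (T (e • ψ)) = inner 𝕜 ψ (T ψ) := by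
  rw [map_smul, inner_smul_left, inner_smul_right, ← mul_assoc, RCLike.conj_mul, he]
  simp

lemma norm_inner_map_self_sub_le (T : E →L[𝕜] E) (u w : E) :
    ‖inner 𝕜 u (T u) - inner 𝕜 w (T w)‖ ≤ (‖u‖ + ‖w‖) * ‖T‖ * ‖u - w‖ := by
  have hsplit : inner 𝕜 u (T u) - inner 𝕜 w (T w) =
      inner 𝕜 (u - w) (T u) + inner 𝕜 w (T (u - w)) := by
    rw [inner_sub_left, map_sub, inner_sub_right]
    ring
  calc ‖inner 𝕜 u (T u) - inner 𝕜 w (T w)‖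
      ≤ ‖u - w‖ * ‖T u‖ + ‖w‖ * ‖T (u - w)‖ := by
        rw [hsplit]
        exact (norm_add_le _ _).trans
          (add_le_add (norm_inner_le_norm _ _) (norm_inner_le_norm _ _))
    _ ≤ ‖u - w‖ * (‖T‖ * ‖u‖) + ‖w‖ * (‖T‖ * ‖u - w‖) := by
        gcongr <;> exact T.le_opNorm _
    _ = (‖u‖ + ‖w‖) * ‖T‖ * ‖u - w‖ := by ring

end Expectation

section MatrixFunction

variable {n : ℕ} {H : Matrix (Fin n) (Fin n) ℂ}

lemma opNorm_matFun_le (hH : H.IsHermitian) {g : ℝ → ℂ} {M : ℝ} (hM : 0 ≤ M)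
    (hg : ∀ i, ‖g (hH.eigenvalues i)‖ ≤ M) : opNorm (matFun hH g) ≤ M := by
  rw [opNorm, ← cstar_norm_def, matFun, ← star_eq_conjTranspose, mul_assoc,
    CStarRing.norm_coe_unitary_mul, ← Unitary.coe_star, CStarRing.norm_mul_coe_unitary,
    l2_opNorm_diagonal]
  exact (pi_norm_le_iff_of_nonneg hM).2 hg

lemma matFun_sub (hH : H.IsHermitian) (f g : ℝ → ℂ) :
    matFun hH f - matFun hH g = matFun hH (f - g) := by
  rw [matFun, matFun, matFun, ← Matrix.sub_mul, ← Matrix.mul_sub, Matrix.diagonal_sub]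
  rfl

lemma norm_matFun_apply_sub_le (hH : H.IsHermitian) {f g : ℝ → ℂ} {M : ℝ} (hM : 0 ≤ M)
    (hfg : ∀ i, ‖f (hH.eigenvalues i) - g (hH.eigenvalues i)‖ ≤ M)
    (x : EuclideanSpace ℂ (Fin n)) :
    ‖toEuclideanCLM (𝕜 := ℂ) (matFun hH f) x - toEuclideanCLM (𝕜 := ℂ) (matFun hH g) x‖ ≤
      M * ‖x‖ := by
  rw [← _root_.sub_apply, ← map_sub, matFun_sub]
  exact (ContinuousLinearMap.le_opNorm _ x).trans
    (mul_le_mul_of_nonneg_right (opNorm_matFun_le hH hM hfg) (norm_nonneg x))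

end MatrixFunction

lemma norm_sub_ite_le_of_mem_union {P : ℝ → ℂ} {a b μ Δ δ : ℝ} (hΔ : 0 < Δ)
    (hP1 : ∀ x ∈ Set.Icc a (μ - Δ / 2), ‖P x - 1‖ ≤ δ)
    (hP2 : ∀ x ∈ Set.Icc (μ + Δ / 2) b, ‖P x‖ ≤ δ)
    {x : ℝ} (hx : x ∈ Set.Icc a (μ - Δ / 2) ∪ Set.Icc (μ + Δ / 2) b) :
    ‖P x - (if x ≤ μ then 1 else 0)‖ ≤ δ := by
  rcases hx with hx | hx
  · rw [if_pos (by linarith [hx.2])]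
    exact hP1 x hx
  · rw [if_neg (by linarith [hx.1]), sub_zero]
    exact hP2 x hx

/-- Ground state projection via an approximate shifted sign function.
`H` is Hermitian with spectrum in `[−1, μ−Δ/2] ∪ [μ+Δ/2, 1]`; the function `P`
satisfies `|P − 1| ≤ γε/12` on `[−1, μ−Δ/2]` and `|P| ≤ γε/12` on `[μ+Δ/2, 1]`;
`θ(H)|φ₀⟩ = ⟨ψ₀|φ₀⟩|ψ₀⟩` with `|⟨ψ₀|φ₀⟩| ≥ γ > 0` (here `θ(x) = 1` for `x ≤ μ`, else
`0`).  Then `‖P(H)|φ₀⟩ − ⟨ψ₀|φ₀⟩|ψ₀⟩‖ ≤ γε/12`; the normalized state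
`ψ = P(H)φ₀/‖P(H)φ₀‖` satisfies `‖ψ − e^{iα}ψ₀‖ ≤ ε/6` for a suitable phase `α`; and
`|⟨ψ|O|ψ⟩ − ⟨ψ₀|O|ψ₀⟩| ≤ ε‖O‖/2` for every Hermitian `O`. -/
theorem stmt19 {n : ℕ} (H : Matrix (Fin n) (Fin n) ℂ) (hH : H.IsHermitian)
    (μ Δ γ ε : ℝ) (hΔ : 0 < Δ) (hγ : 0 < γ) (hε : ε ∈ Set.Ioo (0 : ℝ) 1)
    (hspec : ∀ i, hH.eigenvalues i ∈
      Set.Icc (-1 : ℝ) (μ - Δ / 2) ∪ Set.Icc (μ + Δ / 2) 1)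
    (P : ℝ → ℂ)
    (hP1 : ∀ x ∈ Set.Icc (-1 : ℝ) (μ - Δ / 2), ‖P x - 1‖ ≤ γ * ε / 12)
    (hP2 : ∀ x ∈ Set.Icc (μ + Δ / 2) (1 : ℝ), ‖P x‖ ≤ γ * ε / 12)
    (φ₀ ψ₀ : EuclideanSpace ℂ (Fin n)) (hφ₀ : ‖φ₀‖ = 1) (hψ₀ : ‖ψ₀‖ = 1)
    (hproj : Matrix.toEuclideanCLM (𝕜 := ℂ)
        (matFun hH (fun x => if x ≤ μ then 1 else 0)) φ₀ =
      (inner ℂ ψ₀ φ₀ : ℂ) • ψ₀)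
    (hover : γ ≤ ‖(inner ℂ ψ₀ φ₀ : ℂ)‖) :
    ‖Matrix.toEuclideanCLM (𝕜 := ℂ) (matFun hH P) φ₀ - (inner ℂ ψ₀ φ₀ : ℂ) • ψ₀‖ ≤
        γ * ε / 12 ∧
      (∃ α : ℝ,
        ‖(‖Matrix.toEuclideanCLM (𝕜 := ℂ) (matFun hH P) φ₀‖⁻¹ •
            Matrix.toEuclideanCLM (𝕜 := ℂ) (matFun hH P) φ₀ : EuclideanSpace ℂ (Fin n)) -
          Complex.exp ((α : ℂ) * Complex.I) • ψ₀‖ ≤ ε / 6) ∧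
      ∀ O : Matrix (Fin n) (Fin n) ℂ, O.IsHermitian →
        ‖(inner ℂ
              (‖Matrix.toEuclideanCLM (𝕜 := ℂ) (matFun hH P) φ₀‖⁻¹ •
                Matrix.toEuclideanCLM (𝕜 := ℂ) (matFun hH P) φ₀ :
                  EuclideanSpace ℂ (Fin n))
              (Matrix.toEuclideanCLM (𝕜 := ℂ) O
                (‖Matrix.toEuclideanCLM (𝕜 := ℂ) (matFun hH P) φ₀‖⁻¹ •
                  Matrix.toEuclideanCLM (𝕜 := ℂ) (matFun hH P) φ₀)) : ℂ) -
            (inner ℂ ψ₀ (Matrix.toEuclideanCLM (𝕜 := ℂ) O ψ₀) : ℂ)‖ ≤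
          ε * opNorm O / 2 := by
  have hε0 : 0 < ε := hε.1
  set v := toEuclideanCLM (𝕜 := ℂ) (matFun hH P) φ₀
  set c : ℂ := inner ℂ ψ₀ φ₀
  set e := Complex.exp (c.arg * Complex.I)
  have hc : c ≠ 0 := norm_pos_iff.1 (hγ.trans_le hover)
  have hdist : ‖v - c • ψ₀‖ ≤ γ * ε / 12 := by
    rw [← hproj, ← mul_one (γ * ε / 12), ← hφ₀]
    exact norm_matFun_apply_sub_le hH (by positivity)
      (fun i => norm_sub_ite_le_of_mem_union hΔ hP1 hP2 (hspec i)) φ₀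
  have hphase : ‖normalize v - e • ψ₀‖ ≤ ε / 6 :=
    calc ‖normalize v - e • ψ₀‖
        ≤ 2 * ‖v - c • ψ₀‖ / ‖c‖ := norm_normalize_sub_exp_arg_smul_le hc hψ₀ v
      _ ≤ 2 * (γ * ε / 12) / γ := by gcongr
      _ = ε / 6 := by field_simp; ring
  refine ⟨hdist, ⟨c.arg, hphase⟩, fun O _ => ?_⟩
  have he : ‖e‖ = 1 := Complex.norm_exp_ofReal_mul_I _
  have hO : 0 ≤ opNorm O := norm_nonneg _
  set T := toEuclideanCLM (𝕜 := ℂ) O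
  calc _ = ‖inner ℂ (normalize v) (T (normalize v)) - inner ℂ (e • ψ₀) (T (e • ψ₀))‖ := by
        rw [inner_smul_map_smul_of_norm_eq_one he]
        rfl
    _ ≤ (1 + 1) * opNorm O * (ε / 6) := by
        refine (norm_inner_map_self_sub_le _ _ _).trans ?_
        rw [norm_smul, he, hψ₀, one_mul]
        gcongr
        · exact norm_normalize_le_one v
        · rfl
    _ ≤ ε * opNorm O / 2 := by nlinarith
end
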